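/- arXiv:1808.06487 — 2 statements merged into one kernel-verified Lean document; each statement's English description precedes it below -/
import Mathlib

section
/- In the decoding setup for toric codes: if (g,h) lies in the kernel of the map (g,h) ↦ (g(P)y(P) − h(P))_{P∈T}, where y = f + e with f ∈ F_q[U], error e supported on T₀ ⊆ T with |T₀| ≤ t, and the minimum distance of C_{□+□̃} exceeds t, then g vanishes on T₀ and h = g·f as evaluation vectors. -/
open MvPolynomial

/-- Evaluation of a two-variable polynomial at all points of the torus `(Fˣ)²`. -/
noncomputable def torusEval (F : Type*) [Field F] :
    MvPolynomial (Fin 2) F →ₗ[F] (Fˣ × Fˣ → F) :=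
  LinearMap.pi fun t : Fˣ × Fˣ =>
    (MvPolynomial.aeval fun i : Fin 2 => if i = 0 then (t.1 : F) else (t.2 : F)).toLinearMap

/-- The span of monomials with exponent vectors in `U`. -/
noncomputable def monSpan (F : Type*) [Field F] (U : Set (ℕ × ℕ)) : Submodule F (MvPolynomial (Fin 2) F) :=
  Submodule.span F {m : MvPolynomial (Fin 2) F | ∃ u ∈ U, m = X 0 ^ u.1 * X 1 ^ u.2}

/-- The toric code associated to the exponent set `U`. -/
noncomputable def toricCode (F : Type*) [Field F] (U : Set (ℕ × ℕ)) :
    Submodule F (Fˣ × Fˣ → F) :=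
  Submodule.map (torusEval F) (monSpan F U)

/- The polynomial `g f - h` evaluates to `-(g e)` on the torus, so it is a codeword of
`C_{□+□̃}` supported on `T₀`; since `|T₀| ≤ t < d(C_{□+□̃})` it vanishes, which gives both
`h = g f` and `g e = 0`. -/

theorem hammingNorm_le_card_of_forall_notMem_eq_zero {ι : Type*} [Fintype ι] {β : ι → Type*}
    [∀ i, Zero (β i)] [∀ i, DecidableEq (β i)] {x : ∀ i, β i} {s : Finset ι}
    (hx : ∀ i ∉ s, x i = 0) : hammingNorm x ≤ s.card :=
  Finset.card_le_card fun i hi => by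
    by_contra hs
    exact (Finset.mem_filter.mp hi).2 (hx i hs)

theorem eq_zero_of_forall_notMem_eq_zero {ι : Type*} [Fintype ι] {β : ι → Type*}
    [∀ i, Zero (β i)] [∀ i, DecidableEq (β i)] {C : Set (∀ i, β i)} {t : ℕ}
    (hdist : ∀ c ∈ C, c ≠ 0 → t < hammingNorm c) {c : ∀ i, β i} (hc : c ∈ C)
    {s : Finset ι} (hs : s.card ≤ t) (hcs : ∀ i ∉ s, c i = 0) : c = 0 := by
  by_contra hne
  have := hammingNorm_le_card_of_forall_notMem_eq_zero hcs
  have := hdist c hc hne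
  omega

theorem torusEval_mul (F : Type*) [Field F] (a b : MvPolynomial (Fin 2) F) :
    torusEval F (a * b) = torusEval F a * torusEval F b := by
  funext P
  simp [torusEval]

theorem monSpan_mul_le (F : Type*) [Field F] (U V : Set (ℕ × ℕ)) :
    monSpan F U * monSpan F V ≤ monSpan F (Set.image2 (· + ·) U V) := by
  rw [monSpan, monSpan, Submodule.span_mul_span]
  refine Submodule.span_mono ?_
  rintro _ ⟨_, ⟨u, hu, rfl⟩, _, ⟨v, hv, rfl⟩, rfl⟩
  exact ⟨u + v, Set.mem_image2_of_mem hu hv, by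
    simp only [Prod.fst_add, Prod.snd_add, pow_add]; ring⟩

/-- Error locating: let `y = ev f + e` with `f ∈ F_q[U]` and error `e` supported on
`T₀` with `|T₀| ≤ t`, and suppose the minimum distance of `C_{□+□̃}` exceeds `t`.
If `(g,h) ∈ F_q[Ut] ⊕ F_q[U+Ut]` is in the kernel of
`(g,h) ↦ (g(P)y(P) − h(P))_P`, then `g` vanishes on `T₀` and `h = g·f` as
evaluation vectors. -/
theorem toric_error_locating (F : Type*) [Field F] [Fintype F] [DecidableEq F]
    (U Ut : Set (ℕ × ℕ)) (t : ℕ)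
    (f g h : MvPolynomial (Fin 2) F)
    (hf : f ∈ monSpan F U) (hg : g ∈ monSpan F Ut)
    (hh : h ∈ monSpan F (Set.image2 (· + ·) U Ut))
    (e : Fˣ × Fˣ → F) (T₀ : Finset (Fˣ × Fˣ))
    (hsupp : ∀ P : Fˣ × Fˣ, P ∈ T₀ ↔ e P ≠ 0) (hT₀ : T₀.card ≤ t)
    (hdist : ∀ c ∈ toricCode F (Set.image2 (· + ·) U Ut), c ≠ 0 → t < hammingNorm c)
    (y : Fˣ × Fˣ → F) (hy : y = torusEval F f + e)
    (hker : ∀ P : Fˣ × Fˣ, torusEval F g P * y P - torusEval F h P = 0) :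
    (∀ P ∈ T₀, torusEval F g P = 0) ∧
    (∀ P : Fˣ × Fˣ, torusEval F h P = torusEval F g P * torusEval F f P) := by
  set c := torusEval F (g * f - h) with hc_def
  have hc_apply : ∀ P, c P = torusEval F g P * torusEval F f P - torusEval F h P := fun P => by
    simp only [hc_def, map_sub, torusEval_mul, Pi.sub_apply, Pi.mul_apply]
  have hc_mem : c ∈ toricCode F (Set.image2 (· + ·) U Ut) :=
    ⟨g * f - h, Submodule.sub_mem _
      (mul_comm f g ▸ monSpan_mul_le F U Ut (Submodule.mul_mem_mul hf hg)) hh, rfl⟩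
  have hc_error : ∀ P, c P = -(torusEval F g P * e P) := fun P => by
    have := hker P
    rw [hy, Pi.add_apply] at this
    rw [hc_apply]
    linear_combination this
  have hc_zero : c = 0 := eq_zero_of_forall_notMem_eq_zero hdist hc_mem hT₀ fun P hP => by
    rw [hc_error, not_not.mp (mt (hsupp P).mpr hP), mul_zero, neg_zero]
  refine ⟨fun P hP => ?_, fun P => ?_⟩
  · have := congrFun hc_zero P
    rw [hc_error, Pi.zero_apply, neg_eq_zero] at this
    exact (mul_eq_zero.mp this).resolve_right ((hsupp P).mp hP)
  · have := congrFun hc_zero P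
    rw [hc_apply, Pi.zero_apply] at this
    linear_combination -this
end

section
/- In the decoding setup: if (g,h) is in the kernel of the map (g,h) ↦ (g(P)y(P)−h(P))_P with g ≠ 0 and g vanishing on the error support, and if d(C_□̃) > n − d(C_□), then there is a unique f ∈ F_q[U] with h = g·f on the torus, and this f satisfies y(P) = f(P) for all P with g(P) ≠ 0. -/
/-!
Since `g` vanishes wherever the error does, `h = g · ev f` on the torus, so `ev f` is a solution.
Two solutions differ by a codeword of `C_□` whose support misses that of `g`; if it were nonzero,
the two weights would add up to more than `d(C_□) + (n - d(C_□)) = n`. Where `g(P) ≠ 0`,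
cancelling `g(P)` in `g(P) y(P) = h(P) = g(P) w(P)` gives `y(P) = w(P)`.
-/

open MvPolynomial

section HammingWeight

variable {ι K : Type*} [Fintype ι] [DecidableEq K]

theorem hammingNorm_add_le_card_of_mul_eq_zero [MulZeroClass K] [NoZeroDivisors K]
    {c g : ι → K} (hgc : g * c = 0) :
    hammingNorm c + hammingNorm g ≤ Fintype.card ι := by
  classical
  rw [hammingNorm, hammingNorm, ← Finset.card_union_of_disjoint]
  · exact Finset.card_le_univ _
  · rw [Finset.disjoint_filter]
    exact fun P _ hc hg => mul_ne_zero hg hc (congrFun hgc P)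

theorem mul_left_injOn_of_card_sub_lt_hammingNorm [Ring K] [NoZeroDivisors K]
    {C : Submodule K (ι → K)} {d : ℕ} (hd : ∀ c ∈ C, c ≠ 0 → d ≤ hammingNorm c)
    {g : ι → K} (hg : Fintype.card ι - d < hammingNorm g) :
    Set.InjOn (g * ·) C := by
  intro w hw w' hw' hgw
  by_contra hne
  have hweight := hd (w - w') (C.sub_mem hw hw') (sub_ne_zero.mpr hne)
  have hsum := hammingNorm_add_le_card_of_mul_eq_zero (c := w - w') (g := g)
    (by rw [mul_sub]; exact sub_eq_zero.mpr hgw)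
  omega

end HammingWeight

theorem toric_error_correcting_general (F : Type*) [Field F] [Fintype F] [DecidableEq F]
    (U Ut : Set (ℕ × ℕ)) (dU : ℕ)
    (hdU : ∀ c ∈ toricCode F U, c ≠ 0 → dU ≤ hammingNorm c)
    (hdUt : ∀ c ∈ toricCode F Ut, c ≠ 0 →
      Fintype.card (Fˣ × Fˣ) - dU < hammingNorm c)
    (f g h : MvPolynomial (Fin 2) F)
    (hf : f ∈ monSpan F U) (hg : g ∈ monSpan F Ut)
    (e y : Fˣ × Fˣ → F) (hy : y = torusEval F f + e)
    (hg0 : torusEval F g ≠ 0)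
    (hgvan : ∀ P : Fˣ × Fˣ, e P ≠ 0 → torusEval F g P = 0)
    (hker : ∀ P : Fˣ × Fˣ, torusEval F g P * y P - torusEval F h P = 0) :
    (∃! w : Fˣ × Fˣ → F, w ∈ toricCode F U ∧
        ∀ P : Fˣ × Fˣ, torusEval F h P = torusEval F g P * w P) ∧
    (∀ w : Fˣ × Fˣ → F, w ∈ toricCode F U →
      (∀ P : Fˣ × Fˣ, torusEval F h P = torusEval F g P * w P) →
      ∀ P : Fˣ × Fˣ, torusEval F g P ≠ 0 → y P = w P) := by
  have hGy : torusEval F g * y = torusEval F h := funext fun P => sub_eq_zero.mp (hker P)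
  have hGe : torusEval F g * e = 0 := funext fun P => by
    by_cases he : e P = 0
    · simp [he]
    · simp [hgvan P he]
  have hH : torusEval F h = torusEval F g * torusEval F f := by
    rw [← hGy, hy, mul_add, hGe, add_zero]
  have hf' : torusEval F f ∈ toricCode F U := ⟨f, hf, rfl⟩
  have hinj : Set.InjOn (torusEval F g * ·) (toricCode F U) :=
    mul_left_injOn_of_card_sub_lt_hammingNorm hdU (hdUt _ ⟨g, hg, rfl⟩ hg0)
  refine ⟨⟨torusEval F f, ⟨hf', congrFun hH⟩, fun w hw => hinj hw.1 hf' ?_⟩, ?_⟩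
  · exact (funext hw.2).symm.trans hH
  · intro w _ hw P hgP
    exact mul_left_cancel₀ hgP ((congrFun hGy P).trans (hw P))

/-- Error correcting: suppose `(g,h)` lies in the kernel of
`(g,h) ↦ (g(P)y(P) − h(P))_P`, with `g ≠ 0` (as an evaluation vector) vanishing on
the support of the error `e`, where `y = ev f + e`, and suppose
`d(C_□̃) > n − d(C_□)`.  Then there is a unique codeword `w` of `C_□` with
`h = g·w` on the torus, and this `w` agrees with `y` at every point where
`g` does not vanish. -/
theorem toric_error_correcting (F : Type*) [Field F] [Fintype F] [DecidableEq F]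
    (U Ut : Set (ℕ × ℕ)) (dU dUt : ℕ)
    (hdU : ∀ c ∈ toricCode F U, c ≠ 0 → dU ≤ hammingNorm c)
    (hdUt : ∀ c ∈ toricCode F Ut, c ≠ 0 →
      Fintype.card (Fˣ × Fˣ) - dU < hammingNorm c)
    (f g h : MvPolynomial (Fin 2) F)
    (hf : f ∈ monSpan F U) (hg : g ∈ monSpan F Ut)
    (hh : h ∈ monSpan F (Set.image2 (· + ·) U Ut))
    (e y : Fˣ × Fˣ → F) (hy : y = torusEval F f + e)
    (hg0 : torusEval F g ≠ 0)
    (hgvan : ∀ P : Fˣ × Fˣ, e P ≠ 0 → torusEval F g P = 0)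
    (hker : ∀ P : Fˣ × Fˣ, torusEval F g P * y P - torusEval F h P = 0) :
    (∃! w : Fˣ × Fˣ → F, w ∈ toricCode F U ∧
        ∀ P : Fˣ × Fˣ, torusEval F h P = torusEval F g P * w P) ∧
    (∀ w : Fˣ × Fˣ → F, w ∈ toricCode F U →
      (∀ P : Fˣ × Fˣ, torusEval F h P = torusEval F g P * w P) →
      ∀ P : Fˣ × Fˣ, torusEval F g P ≠ 0 → y P = w P) :=
  toric_error_correcting_general F U Ut dU hdU hdUt f g h hf hg e y hy hg0 hgvan hker
end
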